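/- arXiv:1311.3804 — 6 statements merged into one kernel-verified Lean document; each statement's English description precedes it below -/
import Mathlib

section
/- Let G be a finite connected simple graph and x a vertex of G. Then the boundary ∂(x) of x is an x-geodominating set of G; that is, for every vertex u of G there exists a vertex y ∈ ∂(x) such that u lies on some x–y geodesic (equivalently, d(x,u) + d(u,y) = d(x,y)). -/
open SimpleGraph

/-- The boundary of a vertex `x`: vertices `v` all of whose neighbors are
no further from `x` than `v` itself. -/
def boundary {V : Type*} (G : SimpleGraph V) (x : V) : Set V :=
  {v | ∀ w, G.Adj v w → G.dist x w ≤ G.dist x v}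

/-- `S` is an `x`-geodominating set: every vertex lies on an `x`–`y` geodesic
for some `y ∈ S`. -/
def IsGeodominatingSet {V : Type*} (G : SimpleGraph V) (x : V) (S : Set V) : Prop :=
  ∀ u : V, ∃ y ∈ S, G.dist x u + G.dist u y = G.dist x y

/-! Among the vertices `y` such that `u` lies on an `x`–`y` geodesic, take one farthest from `x`.
A neighbour `w` of `y` farther from `x` would extend the geodesic, so `u` would lie on an
`x`–`w` geodesic with `w` farther still; hence `y` is a boundary vertex. -/

section Geodesic

variable {V : Type*} (G : SimpleGraph V)

def LiesOnGeodesic (x u y : V) : Prop :=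
  G.dist x u + G.dist u y = G.dist x y

variable {G}

theorem liesOnGeodesic_self_right (x u : V) : LiesOnGeodesic G x u u := by
  simp [LiesOnGeodesic]

theorem LiesOnGeodesic.trans (hG : G.Connected) {x u y w : V} (huy : LiesOnGeodesic G x u y)
    (hyw : LiesOnGeodesic G x y w) : LiesOnGeodesic G x u w := by
  refine le_antisymm ?_ hG.dist_triangle
  calc G.dist x u + G.dist u w ≤ G.dist x u + (G.dist u y + G.dist y w) :=
        Nat.add_le_add_left hG.dist_triangle _
    _ = G.dist x w := by rw [← add_assoc, huy, hyw]

theorem liesOnGeodesic_of_adj_of_dist_lt {x y w : V} (hadj : G.Adj y w)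
    (hlt : G.dist x y < G.dist x w) : LiesOnGeodesic G x y w := by
  have hyw : G.dist y w = 1 := dist_eq_one_iff_adj.mpr hadj
  unfold LiesOnGeodesic
  rcases hadj.diff_dist_adj (u := x) with h | h | h <;> omega

theorem mem_boundary_of_forall_liesOnGeodesic_dist_le (hG : G.Connected) {x u y : V}
    (hy : LiesOnGeodesic G x u y)
    (hmax : ∀ w, LiesOnGeodesic G x u w → G.dist x w ≤ G.dist x y) : y ∈ boundary G x := by
  intro w hadj
  by_contra! hlt
  exact (hmax w (hy.trans hG (liesOnGeodesic_of_adj_of_dist_lt hadj hlt))).not_gt hlt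

end Geodesic

theorem boundary_isGeodominatingSet {V : Type*} [Fintype V] (G : SimpleGraph V)
    (hG : G.Connected) (x : V) :
    IsGeodominatingSet G x (boundary G x) := by
  intro u
  obtain ⟨y, hy, hmax⟩ := Set.exists_max_image {y | LiesOnGeodesic G x u y} (G.dist x)
    (Set.toFinite _) ⟨u, liesOnGeodesic_self_right x u⟩
  exact ⟨y, mem_boundary_of_forall_liesOnGeodesic_dist_le hG hy hmax, hy⟩
end

section
/- Let G be a finite connected simple graph and x a vertex of G. Then ∂(x) is the unique x-geodominating set of minimum cardinality; that is, ∂(x) is an x-geodominating set and every x-geodominating set S satisfies |∂(x)| ≤ |S|, with equality only if S = ∂(x). -/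
/-!
A vertex `u` lying on an `x`–`v` geodesic also lies on an `x`–`w` geodesic for every neighbour `w`
of `v` farther from `x`; so an `x`–`y` geodesic through `u` with `y` as far from `x` as possible
ends in `∂(x)`, and `∂(x)` is `x`-geodominating. Conversely, if `v ∈ ∂(x)` lies on an `x`–`y`
geodesic with `y ≠ v`, the first step from `v` towards `y` does not move away from `x`, which makes
the geodesic shorter than itself. Hence `∂(x)` lies inside every `x`-geodominating set.
-/

open SimpleGraph

namespace SimpleGraph

variable {V : Type*} {G : SimpleGraph V} {u v w x y : V}

lemma Reachable.exists_adj_dist_lt (h : G.Reachable v y) (hne : v ≠ y) :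
    ∃ w, G.Adj v w ∧ G.dist w y < G.dist v y := by
  obtain ⟨p, hp⟩ := h.exists_walk_length_eq_dist
  cases p with
  | nil => exact absurd rfl hne
  | cons hadj q =>
    refine ⟨_, hadj, ?_⟩
    have := dist_le q
    rw [Walk.length_cons] at hp
    omega

lemma Connected.dist_add_dist_eq_of_adj (hG : G.Connected)
    (h : G.dist x u + G.dist u v = G.dist x v) (hadj : G.Adj v w)
    (hw : G.dist x v < G.dist x w) : G.dist x u + G.dist u w = G.dist x w := by
  have hvw : G.dist v w = 1 := dist_eq_one_iff_adj.mpr hadj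
  have : G.dist x w ≤ G.dist x v + G.dist v w := hG.dist_triangle
  have : G.dist x w ≤ G.dist x u + G.dist u w := hG.dist_triangle
  have : G.dist u w ≤ G.dist u v + G.dist v w := hG.dist_triangle
  omega

end SimpleGraph

section

variable {V : Type*} {G : SimpleGraph V} {v x y : V}

lemma isGeodominatingSet_boundary [Finite V] (hG : G.Connected) :
    IsGeodominatingSet G x (boundary G x) := by
  intro u
  obtain ⟨y, hy, hmax⟩ := Set.exists_max_image {y | G.dist x u + G.dist u y = G.dist x y}
    (G.dist x) (Set.toFinite _) ⟨u, by simp⟩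
  refine ⟨y, fun w hadj => ?_, hy⟩
  by_contra! hlt
  exact (hmax w (hG.dist_add_dist_eq_of_adj hy hadj hlt)).not_gt hlt

lemma eq_of_mem_boundary_of_dist_add_dist_eq (hG : G.Connected) (hv : v ∈ boundary G x)
    (h : G.dist x v + G.dist v y = G.dist x y) : v = y := by
  by_contra hne
  obtain ⟨w, hadj, hwy⟩ := (hG v y).exists_adj_dist_lt hne
  have : G.dist x w ≤ G.dist x v := hv w hadj
  have : G.dist x y ≤ G.dist x w + G.dist w y := hG.dist_triangle
  omega

lemma boundary_subset_of_isGeodominatingSet (hG : G.Connected) {S : Set V}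
    (hS : IsGeodominatingSet G x S) : boundary G x ⊆ S := fun v hv => by
  obtain ⟨y, hyS, hy⟩ := hS v
  rwa [eq_of_mem_boundary_of_dist_add_dist_eq hG hv hy]

end

theorem boundary_unique_minimum_geodominatingSet {V : Type*} [Fintype V] (G : SimpleGraph V)
    (hG : G.Connected) (x : V) :
    IsGeodominatingSet G x (boundary G x) ∧
      ∀ S : Set V, IsGeodominatingSet G x S →
        (boundary G x).ncard ≤ S.ncard ∧ ((boundary G x).ncard = S.ncard → S = boundary G x) := by
  refine ⟨isGeodominatingSet_boundary hG, fun S hS => ?_⟩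
  have hsub := boundary_subset_of_isGeodominatingSet hG hS
  exact ⟨Set.ncard_le_ncard hsub S.toFinite,
    fun hcard => (Set.eq_of_subset_of_ncard_le hsub hcard.ge S.toFinite).symm⟩
end

section
/- Let G and H be finite connected simple graphs, g ∈ V(G) and h ∈ V(H). Then the boundary of the vertex (g,h) in the Cartesian product G □ H equals the Cartesian product of the boundaries: ∂_{G □ H}((g,h)) = ∂_G(g) × ∂_H(h). -/
open SimpleGraph

/-! Distances add up in `G □ H`, and a neighbour of `(a, b)` changes exactly one coordinate
along an edge of its factor; so the distance from `(g, h)` never increases along the edges at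
`(a, b)` iff it never increases along the edges of `G` at `a` nor along those of `H` at `b`. -/

namespace SimpleGraph

variable {V W : Type*} {G : SimpleGraph V} {H : SimpleGraph W}

theorem dist_boxProd_of_reachable {x y : V × W} (hG : G.Reachable x.1 y.1)
    (hH : H.Reachable x.2 y.2) :
    (G □ H).dist x y = G.dist x.1 y.1 + H.dist x.2 y.2 := by
  rw [dist, dist, dist, edist_boxProd,
    ENat.toNat_add (edist_ne_top_iff_reachable.mpr hG) (edist_ne_top_iff_reachable.mpr hH)]

theorem Connected.dist_boxProd (hG : G.Connected) (hH : H.Connected) (x y : V × W) :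
    (G □ H).dist x y = G.dist x.1 y.1 + H.dist x.2 y.2 :=
  dist_boxProd_of_reachable (hG x.1 y.1) (hH x.2 y.2)

end SimpleGraph

theorem boundary_boxProd_general {V W : Type*}
    (G : SimpleGraph V) (H : SimpleGraph W) (hG : G.Connected) (hH : H.Connected)
    (g : V) (h : W) :
    boundary (G □ H) (g, h) = boundary G g ×ˢ boundary H h := by
  ext ⟨a, b⟩
  simp only [boundary, Set.mem_ofPred_eq, Set.mem_prod, hG.dist_boxProd hH, Prod.forall,
    boxProd_adj]
  constructor
  · intro hab
    exact ⟨fun c hc ↦ by simpa using hab c b (.inl ⟨hc, rfl⟩),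
      fun d hd ↦ by simpa using hab a d (.inr ⟨hd, rfl⟩)⟩
  · rintro ⟨ha, hb⟩ c d (⟨hc, rfl⟩ | ⟨hd, rfl⟩)
    · exact Nat.add_le_add_right (ha c hc) _
    · exact Nat.add_le_add_left (hb d hd) _

theorem boundary_boxProd {V W : Type*} [Fintype V] [Fintype W]
    (G : SimpleGraph V) (H : SimpleGraph W) (hG : G.Connected) (hH : H.Connected)
    (g : V) (h : W) :
    boundary (G □ H) (g, h) = boundary G g ×ˢ boundary H h :=
  boundary_boxProd_general G H hG hH g h
end

section
/- Let G and H be finite connected simple graphs, g ∈ V(G) and h ∈ V(H). Then ∂_G(g) × ∂_H(h) ⊆ ∂_{G ⊠ H}((g,h)), where G ⊠ H denotes the strong product of G and H. -/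
open SimpleGraph

/-- The strong product of simple graphs. -/
def strongProd {V W : Type*} (G : SimpleGraph V) (H : SimpleGraph W) : SimpleGraph (V × W) where
  Adj p q := (G.Adj p.1 q.1 ∧ p.2 = q.2) ∨ (p.1 = q.1 ∧ H.Adj p.2 q.2) ∨
    (G.Adj p.1 q.1 ∧ H.Adj p.2 q.2)
  symm := by
    constructor
    rintro ⟨a, b⟩ ⟨c, d⟩ (⟨h, rfl⟩ | ⟨rfl, h⟩ | ⟨h1, h2⟩)
    · exact Or.inl ⟨h.symm, rfl⟩
    · exact Or.inr (Or.inl ⟨rfl, h.symm⟩)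
    · exact Or.inr (Or.inr ⟨h1.symm, h2.symm⟩)
  loopless := by
    constructor
    rintro ⟨a, b⟩ (⟨h, -⟩ | ⟨-, h⟩ | ⟨h, -⟩) <;> exact h.ne rfl

/-!
Extended distances in the strong product are the maximum of those in the factors: each coordinate
of a walk in the product moves by at most one step at a time, and two walks in the factors can be
run simultaneously, the shorter one waiting at its end. A neighbour of `(v, w)` has each coordinate
equal or adjacent to `v` resp. `w`, so the boundary conditions in the factors bound both terms of
the maximum. Adjacent vertices lie in the same component, so the boundary condition reads the same
with `dist` (which is `0` between components) and `edist`.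
-/

namespace SimpleGraph

variable {V W : Type*} {G : SimpleGraph V} {H : SimpleGraph W}

theorem edist_le_of_edist_adj_le_one {f : V → W}
    (hf : ∀ ⦃u v⦄, G.Adj u v → H.edist (f u) (f v) ≤ 1) (u v : V) :
    H.edist (f u) (f v) ≤ G.edist u v := by
  refine le_iInf fun p => ?_
  induction p with
  | nil => simp
  | @cons a b c hadj p ih =>
    calc H.edist (f a) (f c) ≤ H.edist (f a) (f b) + H.edist (f b) (f c) := H.edist_triangle
      _ ≤ 1 + p.length := add_le_add (hf hadj) ih
      _ = (Walk.cons hadj p).length := by rw [Walk.length_cons, Nat.cast_succ, add_comm]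

theorem strongProd_adj_of_fst {a c : V} (h : G.Adj a c) (b : W) :
    (strongProd G H).Adj (a, b) (c, b) :=
  Or.inl ⟨h, rfl⟩

theorem strongProd_adj_of_snd (a : V) {b d : W} (h : H.Adj b d) :
    (strongProd G H).Adj (a, b) (a, d) :=
  Or.inr (Or.inl ⟨rfl, h⟩)

theorem strongProd_adj_of_adj_of_adj {a c : V} {b d : W} (hG : G.Adj a c) (hH : H.Adj b d) :
    (strongProd G H).Adj (a, b) (c, d) :=
  Or.inr (Or.inr ⟨hG, hH⟩)

theorem fst_adj_or_eq_of_strongProd_adj {p q : V × W} (h : (strongProd G H).Adj p q) :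
    G.Adj p.1 q.1 ∨ p.1 = q.1 := by
  rcases h with ⟨h, -⟩ | ⟨h, -⟩ | ⟨h, -⟩ <;> tauto

theorem snd_adj_or_eq_of_strongProd_adj {p q : V × W} (h : (strongProd G H).Adj p q) :
    H.Adj p.2 q.2 ∨ p.2 = q.2 := by
  rcases h with ⟨-, h⟩ | ⟨-, h⟩ | ⟨-, h⟩ <;> tauto

theorem edist_fst_le_edist_strongProd (p q : V × W) :
    G.edist p.1 q.1 ≤ (strongProd G H).edist p q :=
  edist_le_of_edist_adj_le_one
    (fun _ _ h => edist_le_one_iff_adj_or_eq.2 (fst_adj_or_eq_of_strongProd_adj h)) p q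

theorem edist_snd_le_edist_strongProd (p q : V × W) :
    H.edist p.2 q.2 ≤ (strongProd G H).edist p q :=
  edist_le_of_edist_adj_le_one
    (fun _ _ h => edist_le_one_iff_adj_or_eq.2 (snd_adj_or_eq_of_strongProd_adj h)) p q

def Walk.strongProd : ∀ {a c : V} {b d : W}, G.Walk a c → H.Walk b d →
    (_root_.strongProd G H).Walk (a, b) (c, d)
  | _, _, _, _, .nil, .nil => .nil
  | a, _, _, _, .nil, .cons h q => .cons (strongProd_adj_of_snd a h) (Walk.strongProd .nil q)
  | _, _, b, _, .cons h p, .nil => .cons (strongProd_adj_of_fst h b) (Walk.strongProd p .nil)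
  | _, _, _, _, .cons h p, .cons h' q =>
    .cons (strongProd_adj_of_adj_of_adj h h') (Walk.strongProd p q)

theorem Walk.length_strongProd : ∀ {a c : V} {b d : W} (p : G.Walk a c) (q : H.Walk b d),
    (p.strongProd q).length = max p.length q.length
  | _, _, _, _, .nil, .nil => by simp [Walk.strongProd]
  | _, _, _, _, .nil, .cons _ q => by
    rw [Walk.strongProd, Walk.length_cons, Walk.length_strongProd .nil q]; simp
  | _, _, _, _, .cons _ p, .nil => by
    rw [Walk.strongProd, Walk.length_cons, Walk.length_strongProd p .nil]; simp
  | _, _, _, _, .cons _ p, .cons _ q => by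
    rw [Walk.strongProd, Walk.length_cons, Walk.length_strongProd p q]; simp

theorem edist_strongProd_le (p q : V × W) :
    (strongProd G H).edist p q ≤ max (G.edist p.1 q.1) (H.edist p.2 q.2) := by
  by_cases hr : G.Reachable p.1 q.1 ∧ H.Reachable p.2 q.2
  · obtain ⟨wG, hwG⟩ := hr.1.exists_walk_length_eq_edist
    obtain ⟨wH, hwH⟩ := hr.2.exists_walk_length_eq_edist
    calc (strongProd G H).edist p q ≤ (wG.strongProd wH).length := edist_le _
      _ = max (G.edist p.1 q.1) (H.edist p.2 q.2) := by
        rw [Walk.length_strongProd, Nat.mono_cast.map_max, hwG, hwH]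
  · rcases not_and_or.1 hr with hr | hr <;> simp [edist_eq_top_of_not_reachable hr]

theorem edist_strongProd (p q : V × W) :
    (strongProd G H).edist p q = max (G.edist p.1 q.1) (H.edist p.2 q.2) :=
  (edist_strongProd_le p q).antisymm
    (max_le (edist_fst_le_edist_strongProd p q) (edist_snd_le_edist_strongProd p q))

theorem dist_le_dist_iff_edist_le_edist_of_adj {x v w : V} (h : G.Adj v w) :
    G.dist x w ≤ G.dist x v ↔ G.edist x w ≤ G.edist x v := by
  by_cases hr : G.Reachable x v
  · rw [← hr.coe_dist_eq_edist, ← (hr.trans h.reachable).coe_dist_eq_edist, Nat.cast_le]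
  · have hr' : ¬G.Reachable x w := fun hw => hr (hw.trans h.symm.reachable)
    simp [dist_eq_zero_of_not_reachable, edist_eq_top_of_not_reachable, hr, hr']

theorem mem_boundary_iff_edist {x v : V} :
    v ∈ boundary G x ↔ ∀ w, G.Adj v w → G.edist x w ≤ G.edist x v :=
  forall_congr' fun _ => forall_congr' dist_le_dist_iff_edist_le_edist_of_adj

theorem edist_le_of_mem_boundary {x v w : V} (hv : v ∈ boundary G x) (hvw : G.Adj v w ∨ v = w) :
    G.edist x w ≤ G.edist x v := by
  rcases hvw with hvw | rfl
  · exact mem_boundary_iff_edist.1 hv w hvw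
  · exact le_rfl

end SimpleGraph

theorem prod_boundary_subset_boundary_strongProd_general {V W : Type*}
    (G : SimpleGraph V) (H : SimpleGraph W)
    (g : V) (h : W) :
    boundary G g ×ˢ boundary H h ⊆ boundary (strongProd G H) (g, h) := by
  rintro ⟨v, w⟩ ⟨hv, hw⟩
  rw [mem_boundary_iff_edist]
  rintro ⟨v', w'⟩ hadj
  rw [edist_strongProd, edist_strongProd]
  exact max_le_max (edist_le_of_mem_boundary hv (fst_adj_or_eq_of_strongProd_adj hadj))
    (edist_le_of_mem_boundary hw (snd_adj_or_eq_of_strongProd_adj hadj))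

theorem prod_boundary_subset_boundary_strongProd {V W : Type*} [Fintype V] [Fintype W]
    (G : SimpleGraph V) (H : SimpleGraph W) (hG : G.Connected) (hH : H.Connected)
    (g : V) (h : W) :
    boundary G g ×ˢ boundary H h ⊆ boundary (strongProd G H) (g, h) :=
  prod_boundary_subset_boundary_strongProd_general G H g h
end

section
/- Let G and H be finite connected simple graphs, x ∈ V(G) and y ∈ V(H). Then g_x(G)·g_y(H) ≤ g_{(x,y)}(G ⊠ H) ≤ g_x(G)·|V(H)| + |V(G)|·g_y(H), where G ⊠ H denotes the strong product of G and H. -/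
open SimpleGraph

/-- The `x`-geodomination number: the minimum cardinality of an `x`-geodominating set. -/
noncomputable def geodominationNumber {V : Type*} (G : SimpleGraph V) (x : V) : ℕ :=
  sInf {n : ℕ | ∃ S : Set V, IsGeodominatingSet G x S ∧ S.ncard = n}

/-!
Call `u` `x`-extreme when no `x`-geodesic passes through `u` and goes on beyond it. Every
`x`-geodominating set contains the `x`-extreme vertices, and in a finite connected graph they
already form one (extend a geodesic from `x` through `u` as far as possible), so `g_x(G)` is the
number of `x`-extreme vertices.

In `G ⊠ H` the distance is the maximum of the distances of the coordinates. Hence a pair of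
extreme vertices is extreme, and of an extreme pair `(u, v)` the coordinate realising the
maximum of `d(x, u)` and `d(y, v)` is extreme. Counting gives both bounds.
-/

section Geodomination

variable {V : Type*} {G : SimpleGraph V}

def extremeVertices (G : SimpleGraph V) (x : V) : Set V :=
  {u | ∀ s, G.dist x u + G.dist u s = G.dist x s → s = u}

lemma SimpleGraph.Connected.dist_add_dist_eq_trans (hG : G.Connected) {x u s r : V}
    (hus : G.dist x u + G.dist u s = G.dist x s)
    (hsr : G.dist x s + G.dist s r = G.dist x r) :
    G.dist x u + G.dist u r = G.dist x r := by
  have h₁ : G.dist x r ≤ G.dist x u + G.dist u r := hG.dist_triangle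
  have h₂ : G.dist u r ≤ G.dist u s + G.dist s r := hG.dist_triangle
  omega

lemma extremeVertices_subset {x : V} {S : Set V} (hS : IsGeodominatingSet G x S) :
    extremeVertices G x ⊆ S := by
  intro u hu
  obtain ⟨s, hs, hgeo⟩ := hS u
  exact hu s hgeo ▸ hs

lemma isGeodominatingSet_extremeVertices [Finite V] (hG : G.Connected) (x : V) :
    IsGeodominatingSet G x (extremeVertices G x) := by
  intro u
  obtain ⟨s, hus, hmax⟩ := Set.exists_max_image
    {s | G.dist x u + G.dist u s = G.dist x s} (G.dist x) (Set.toFinite _)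
    ⟨u, by simp⟩
  refine ⟨s, fun r hsr => ?_, hus⟩
  have hr : G.dist x r ≤ G.dist x s := hmax r (hG.dist_add_dist_eq_trans hus hsr)
  exact ((hG.dist_eq_zero_iff).mp (by omega)).symm

lemma geodominationNumber_eq_ncard_extremeVertices [Finite V] (hG : G.Connected) (x : V) :
    geodominationNumber G x = (extremeVertices G x).ncard := by
  have hmem : (extremeVertices G x).ncard ∈
      {n : ℕ | ∃ S : Set V, IsGeodominatingSet G x S ∧ S.ncard = n} :=
    ⟨_, isGeodominatingSet_extremeVertices hG x, rfl⟩
  refine le_antisymm (Nat.sInf_le hmem) ?_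
  obtain ⟨S, hS, hcard⟩ := Nat.sInf_mem ⟨_, hmem⟩
  rw [geodominationNumber, ← hcard]
  exact Set.ncard_le_ncard (extremeVertices_subset hS)

end Geodomination

section Walks

variable {V V' : Type*} {G : SimpleGraph V} {G' : SimpleGraph V'} {f : V → V'}

lemma exists_walk_length_le_of_adj_imp
    (hf : ∀ ⦃p q⦄, G.Adj p q → f p = f q ∨ G'.Adj (f p) (f q)) {p q : V}
    (w : G.Walk p q) :
    ∃ w' : G'.Walk (f p) (f q), w'.length ≤ w.length := by
  induction w with
  | nil => exact ⟨Walk.nil, le_rfl⟩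
  | cons hadj _ ih =>
    obtain ⟨w', hw'⟩ := ih
    rcases hf hadj with heq | hadj'
    · refine ⟨w'.copy heq.symm rfl, ?_⟩
      rw [Walk.length_copy, Walk.length_cons]
      omega
    · exact ⟨Walk.cons hadj' w', by simpa using hw'⟩

lemma dist_le_dist_of_adj_imp
    (hf : ∀ ⦃p q⦄, G.Adj p q → f p = f q ∨ G'.Adj (f p) (f q)) {p q : V}
    (hpq : G.Reachable p q) : G'.dist (f p) (f q) ≤ G.dist p q := by
  obtain ⟨w, hw⟩ := hpq.exists_walk_length_eq_dist
  obtain ⟨w', hw'⟩ := exists_walk_length_le_of_adj_imp hf w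
  exact hw ▸ (dist_le w').trans hw'

end Walks

section StrongProduct

variable {V W : Type*} {G : SimpleGraph V} {H : SimpleGraph W}

lemma strongProd_adj_fst {p q : V × W} (h : (strongProd G H).Adj p q) :
    p.1 = q.1 ∨ G.Adj p.1 q.1 := by
  rcases h with ⟨h, -⟩ | ⟨h, -⟩ | ⟨h, -⟩ <;> tauto

lemma strongProd_adj_snd {p q : V × W} (h : (strongProd G H).Adj p q) :
    p.2 = q.2 ∨ H.Adj p.2 q.2 := by
  rcases h with ⟨-, h⟩ | ⟨-, h⟩ | ⟨-, h⟩ <;> tauto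

def strongProdRight (G : SimpleGraph V) (H : SimpleGraph W) (a : V) : H →g strongProd G H where
  toFun b := (a, b)
  map_rel' h := Or.inr (Or.inl ⟨rfl, h⟩)

lemma exists_strongProd_walk_length_eq_max {a c : V} (p : G.Walk a c) {b d : W}
    (q : H.Walk b d) :
    ∃ w : (strongProd G H).Walk (a, b) (c, d), w.length = max p.length q.length := by
  induction p generalizing b with
  | nil => exact ⟨q.map (strongProdRight G H _), (q.length_map _).trans (by simp)⟩
  | @cons a a' c hG p ih =>
    cases q with
    | nil =>
      obtain ⟨w, hw⟩ := ih Walk.nil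
      have hadj : (strongProd G H).Adj (a, d) (a', d) := Or.inl ⟨hG, rfl⟩
      exact ⟨Walk.cons hadj w, by simp [hw]⟩
    | @cons b b' d hH q =>
      obtain ⟨w, hw⟩ := ih q
      have hadj : (strongProd G H).Adj (a, b) (a', b') := Or.inr (Or.inr ⟨hG, hH⟩)
      exact ⟨Walk.cons hadj w, by simp [hw]⟩

lemma strongProd_connected (hG : G.Connected) (hH : H.Connected) :
    (strongProd G H).Connected := by
  have := hG.nonempty
  have := hH.nonempty
  refine Connected.mk fun ⟨a, b⟩ ⟨c, d⟩ => ?_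
  obtain ⟨p⟩ := hG.preconnected a c
  obtain ⟨q⟩ := hH.preconnected b d
  obtain ⟨w, -⟩ := exists_strongProd_walk_length_eq_max p q
  exact ⟨w⟩

lemma strongProd_dist (hG : G.Connected) (hH : H.Connected) (a c : V) (b d : W) :
    (strongProd G H).dist (a, b) (c, d) = max (G.dist a c) (H.dist b d) := by
  refine le_antisymm ?_ (max_le ?_ ?_)
  · obtain ⟨p, hp⟩ := (hG.preconnected a c).exists_walk_length_eq_dist
    obtain ⟨q, hq⟩ := (hH.preconnected b d).exists_walk_length_eq_dist
    obtain ⟨w, hw⟩ := exists_strongProd_walk_length_eq_max p q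
    exact hp ▸ hq ▸ hw ▸ dist_le w
  · exact dist_le_dist_of_adj_imp (f := Prod.fst) (fun _ _ => strongProd_adj_fst)
      ((strongProd_connected hG hH).preconnected (a, b) (c, d))
  · exact dist_le_dist_of_adj_imp (f := Prod.snd) (fun _ _ => strongProd_adj_snd)
      ((strongProd_connected hG hH).preconnected (a, b) (c, d))

lemma extremeVertices_prod_subset (hG : G.Connected) (hH : H.Connected) (x : V) (y : W) :
    extremeVertices G x ×ˢ extremeVertices H y ⊆ extremeVertices (strongProd G H) (x, y) := by
  rintro ⟨u, v⟩ ⟨hu, hv⟩ ⟨s, t⟩ hgeo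
  dsimp only at hu hv
  simp only [strongProd_dist hG hH] at hgeo
  have htG : G.dist x s ≤ G.dist x u + G.dist u s := hG.dist_triangle
  have htH : H.dist y t ≤ H.dist y v + H.dist v t := hH.dist_triangle
  -- The coordinate realising `max (d x s) (d y t)` carries a geodesic through `u` (or `v`).
  rcases le_total (H.dist y t) (G.dist x s) with hle | hle
  · obtain rfl : s = u := hu s (by omega)
    obtain rfl : v = t := hH.dist_eq_zero_iff.mp (by omega)
    rfl
  · obtain rfl : t = v := hv t (by omega)
    obtain rfl : u = s := hG.dist_eq_zero_iff.mp (by omega)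
    rfl

lemma extremeVertices_strongProd_subset (hG : G.Connected) (hH : H.Connected) (x : V) (y : W) :
    extremeVertices (strongProd G H) (x, y) ⊆
      extremeVertices G x ×ˢ Set.univ ∪ Set.univ ×ˢ extremeVertices H y := by
  rintro ⟨u, v⟩ huv
  have hgeo := fun s t => (Prod.mk.injEq s t u v).mp ∘ huv (s, t)
  simp only [strongProd_dist hG hH] at hgeo
  rcases le_total (H.dist y v) (G.dist x u) with hle | hle
  · refine Or.inl ⟨fun s hs => (hgeo s v ?_).1, ⟨⟩⟩
    dsimp only at hs
    simp only [SimpleGraph.dist_self]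
    omega
  · refine Or.inr ⟨⟨⟩, fun t ht => (hgeo u t ?_).2⟩
    dsimp only at ht
    simp only [SimpleGraph.dist_self]
    omega

end StrongProduct

theorem geodominationNumber_strongProd_bounds {V W : Type*} [Fintype V] [Fintype W]
    (G : SimpleGraph V) (H : SimpleGraph W) (hG : G.Connected) (hH : H.Connected)
    (x : V) (y : W) :
    geodominationNumber G x * geodominationNumber H y ≤
        geodominationNumber (strongProd G H) (x, y) ∧
      geodominationNumber (strongProd G H) (x, y) ≤
        geodominationNumber G x * Fintype.card W + Fintype.card V * geodominationNumber H y := by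
  rw [geodominationNumber_eq_ncard_extremeVertices hG x,
    geodominationNumber_eq_ncard_extremeVertices hH y,
    geodominationNumber_eq_ncard_extremeVertices (strongProd_connected hG hH) (x, y)]
  constructor
  · rw [← Set.ncard_prod]
    exact Set.ncard_le_ncard (extremeVertices_prod_subset hG hH x y)
  · calc (extremeVertices (strongProd G H) (x, y)).ncard
        ≤ (extremeVertices G x ×ˢ Set.univ ∪ Set.univ ×ˢ extremeVertices H y).ncard :=
          Set.ncard_le_ncard (extremeVertices_strongProd_subset hG hH x y)
      _ ≤ (extremeVertices G x ×ˢ (Set.univ : Set W)).ncard +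
            ((Set.univ : Set V) ×ˢ extremeVertices H y).ncard := Set.ncard_union_le _ _
      _ = (extremeVertices G x).ncard * Fintype.card W +
            Fintype.card V * (extremeVertices H y).ncard := by
          simp only [Set.ncard_prod, Set.ncard_univ, Nat.card_eq_fintype_card]
end

section
/- Let G be a finite connected simple graph and x a vertex of G. Then the set ∂(x) ∪ {x} is a geodetic set of G; that is, every vertex of G lies on a u–v geodesic for some u, v ∈ ∂(x) ∪ {x}. -/
/-! Extend a geodesic from `x` through `w` as far as possible: among the vertices `b` with `w` on an
`x`–`b` geodesic, one farthest from `x` has no neighbour farther from `x`, since such a neighbour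
would again be such a `b`. So `w` lies on a geodesic from `x` to a boundary vertex of `x`. -/

open SimpleGraph

/-- `S` is a geodetic set: every vertex lies on a `u`–`v` geodesic for some `u, v ∈ S`. -/
def IsGeodeticSet {V : Type*} (G : SimpleGraph V) (S : Set V) : Prop :=
  ∀ w : V, ∃ u ∈ S, ∃ v ∈ S, G.dist u w + G.dist w v = G.dist u v

namespace SimpleGraph.Connected

variable {V : Type*} {G : SimpleGraph V}

theorem dist_add_dist_eq_of_adj_of_dist_lt (hG : G.Connected) {x v b w : V}
    (hgeod : G.dist x v + G.dist v b = G.dist x b) (hadj : G.Adj b w)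
    (hlt : G.dist x b < G.dist x w) :
    G.dist x v + G.dist v w = G.dist x w := by
  have hstep : G.dist x w = G.dist x b + 1 := by
    rcases hadj.diff_dist_adj (u := x) with h | h | h <;> omega
  have hvw : G.dist v w ≤ G.dist v b + 1 := by
    simpa [dist_eq_one_iff_adj.mpr hadj] using hG.dist_triangle (u := v) (v := b) (w := w)
  have hxw : G.dist x w ≤ G.dist x v + G.dist v w := hG.dist_triangle
  omega

theorem exists_mem_boundary_dist_add_dist_eq [Finite V] (hG : G.Connected) (x v : V) :
    ∃ b ∈ boundary G x, G.dist x v + G.dist v b = G.dist x b := by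
  obtain ⟨b, hgeod, hmax⟩ := Set.Finite.exists_maximalFor (G.dist x)
    {b | G.dist x v + G.dist v b = G.dist x b} (Set.toFinite _) ⟨v, by simp⟩
  refine ⟨b, fun w hadj => ?_, hgeod⟩
  by_contra! hlt
  exact hlt.not_ge (hmax (hG.dist_add_dist_eq_of_adj_of_dist_lt hgeod hadj hlt) hlt.le)

end SimpleGraph.Connected

theorem boundary_union_self_isGeodeticSet {V : Type*} [Fintype V] (G : SimpleGraph V)
    (hG : G.Connected) (x : V) :
    IsGeodeticSet G (boundary G x ∪ {x}) := by
  intro w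
  obtain ⟨b, hb, hgeod⟩ := hG.exists_mem_boundary_dist_add_dist_eq x w
  exact ⟨x, Or.inr rfl, b, Or.inl hb, hgeod⟩
end
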